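/- arXiv:2108.13152 — 2 statements merged into one kernel-verified Lean document; each statement's English description precedes it below -/
import Mathlib

section
/- SAut(F₂) admits a nontrivial action on a set of two elements; that is, there exists a nontrivial group homomorphism from SAut(F₂) to the symmetric group on a two-element set (equivalently, SAut(F₂) surjects onto ℤ/2ℤ). -/
open FreeGroup

/-- The exponent sum of the generator `j` in a word of the free group `F_n`. -/
noncomputable def expSum {n : ℕ} (j : Fin n) : FreeGroup (Fin n) →* Multiplicative ℤ :=
  FreeGroup.lift fun k => Multiplicative.ofAdd (if k = j then (1 : ℤ) else 0)

/-- The matrix induced on the abelianization `ℤⁿ` of `F_n` by an automorphism of `F_n`;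
this realizes the canonical map `Aut(F_n) → GL_n(ℤ)`. -/
noncomputable def autMatrix {n : ℕ} (e : MulAut (FreeGroup (Fin n))) :
    Matrix (Fin n) (Fin n) ℤ :=
  fun i j => Multiplicative.toAdd (expSum j (e (FreeGroup.of i)))

/-- Auxiliary homomorphism: `w ↦ ∑ k (exponent sum of a_k in w) * c k`. -/
noncomputable def rowHom {n : ℕ} (c : Fin n → ℤ) : FreeGroup (Fin n) →* Multiplicative ℤ where
  toFun w := Multiplicative.ofAdd (∑ k, Multiplicative.toAdd (expSum k w) * c k)
  map_one' := by simp
  map_mul' := by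
    intro w1 w2
    simp [map_mul, toAdd_mul, add_mul, Finset.sum_add_distrib, ofAdd_add]

lemma expSum_apply_aut {n : ℕ} (e : MulAut (FreeGroup (Fin n))) (j : Fin n)
    (w : FreeGroup (Fin n)) :
    Multiplicative.toAdd (expSum j (e w)) =
      ∑ k, Multiplicative.toAdd (expSum k w) * autMatrix e k j := by
  have h : (expSum j).comp (MulEquiv.toMonoidHom e) = rowHom (fun k => autMatrix e k j) := by
    apply FreeGroup.ext_hom
    intro a
    show expSum j (e (FreeGroup.of a)) =
      Multiplicative.ofAdd
        (∑ k, Multiplicative.toAdd (expSum k (FreeGroup.of a)) * autMatrix e k j)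
    have h1 : ∀ k : Fin n, Multiplicative.toAdd (expSum k (FreeGroup.of a)) * autMatrix e k j
        = if a = k then autMatrix e k j else 0 := by
      intro k
      simp [expSum, ite_mul]
    rw [Finset.sum_congr rfl (fun k _ => h1 k), Finset.sum_ite_eq]
    simp [autMatrix]
  have := DFunLike.congr_fun h w
  simpa [rowHom, mul_comm] using congrArg Multiplicative.toAdd this

lemma autMatrix_mul {n : ℕ} (e1 e2 : MulAut (FreeGroup (Fin n))) :
    autMatrix (e1 * e2) = autMatrix e2 * autMatrix e1 := by
  ext i j
  show Multiplicative.toAdd (expSum j (e1 (e2 (FreeGroup.of i)))) = _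
  rw [expSum_apply_aut e1 j (e2 (FreeGroup.of i))]
  simp [Matrix.mul_apply, autMatrix]

lemma autMatrix_one {n : ℕ} : autMatrix (1 : MulAut (FreeGroup (Fin n))) = 1 := by
  ext i j
  simp [autMatrix, expSum, Matrix.one_apply, eq_comm]

/-- `SAut(F_n)`: the subgroup of `Aut(F_n)` of automorphisms whose induced matrix on the
abelianization `ℤⁿ` has determinant `1`, i.e. the kernel of `det ∘ φ`. -/
noncomputable def SAut (n : ℕ) : Subgroup (MulAut (FreeGroup (Fin n))) where
  carrier := {e | (autMatrix e).det = 1}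
  one_mem' := by simp [Set.mem_setOf_eq, autMatrix_one]
  mul_mem' := by
    intro a b ha hb
    simp only [Set.mem_setOf_eq] at *
    rw [autMatrix_mul, Matrix.det_mul, ha, hb, mul_one]
  inv_mem' := by
    intro a ha
    simp only [Set.mem_setOf_eq] at *
    have h : autMatrix (a * a⁻¹) = autMatrix a⁻¹ * autMatrix a := autMatrix_mul a a⁻¹
    rw [mul_inv_cancel, autMatrix_one] at h
    have := congrArg Matrix.det h
    rw [Matrix.det_one, Matrix.det_mul, ha, mul_one] at this
    exact this.symm

/-- Build an automorphism of `F_n` from its values on the generators together with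
the values of the inverse automorphism on the generators. -/
noncomputable def mkAut {n : ℕ} (f g : Fin n → FreeGroup (Fin n))
    (h1 : ∀ k, FreeGroup.lift g (f k) = FreeGroup.of k)
    (h2 : ∀ k, FreeGroup.lift f (g k) = FreeGroup.of k) :
    MulAut (FreeGroup (Fin n)) :=
  MonoidHom.toMulEquiv (FreeGroup.lift f) (FreeGroup.lift g)
    (FreeGroup.ext_hom _ _ (by simp [h1]))
    (FreeGroup.ext_hom _ _ (by simp [h2]))

lemma mkAut_apply {n : ℕ} (f g : Fin n → FreeGroup (Fin n)) (h1 h2) (w : FreeGroup (Fin n)) :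
    mkAut f g h1 h2 w = FreeGroup.lift f w := rfl

/-- The right transvection `ρ_ij : a_i ↦ a_i a_j`, fixing all other generators
(junk value `1` if `i = j`). -/
noncomputable def rho {n : ℕ} (i j : Fin n) : MulAut (FreeGroup (Fin n)) :=
  if h : i = j then 1 else
    mkAut (fun k => if k = i then .of i * .of j else .of k)
          (fun k => if k = i then .of i * (.of j)⁻¹ else .of k)
      (by
        intro k
        have hji : ¬ (j = i) := fun hji => h hji.symm
        by_cases hk : k = i
        · subst hk; simp [hji]
        · simp [hk])
      (by
        intro k
        have hji : ¬ (j = i) := fun hji => h hji.symm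
        by_cases hk : k = i
        · subst hk; simp [hji]
        · simp [hk])

/-- The left transvection `λ_ij : a_i ↦ a_j a_i`, fixing all other generators
(junk value `1` if `i = j`). -/
noncomputable def lam {n : ℕ} (i j : Fin n) : MulAut (FreeGroup (Fin n)) :=
  if h : i = j then 1 else
    mkAut (fun k => if k = i then .of j * .of i else .of k)
          (fun k => if k = i then (FreeGroup.of j)⁻¹ * .of i else .of k)
      (by
        intro k
        have hji : ¬ (j = i) := fun hji => h hji.symm
        by_cases hk : k = i
        · subst hk; simp [hji]
        · simp [hk])
      (by
        intro k
        have hji : ¬ (j = i) := fun hji => h hji.symm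
        by_cases hk : k = i
        · subst hk; simp [hji]
        · simp [hk])

/-- The involution `ε_i : a_i ↦ a_i⁻¹`, fixing all other generators. -/
noncomputable def eps {n : ℕ} (i : Fin n) : MulAut (FreeGroup (Fin n)) :=
  mkAut (fun k => if k = i then (FreeGroup.of i)⁻¹ else .of k)
        (fun k => if k = i then (FreeGroup.of i)⁻¹ else .of k)
    (by intro k; by_cases hk : k = i <;> simp [hk])
    (by intro k; by_cases hk : k = i <;> simp [hk])

/-- The automorphism `σ_τ` of `F_n` permuting the generators according to `τ`. -/
noncomputable def sigmaPerm {n : ℕ} (τ : Equiv.Perm (Fin n)) : MulAut (FreeGroup (Fin n)) :=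
  FreeGroup.freeGroupCongr τ

/-- The transposition `σ_ij` swapping the generators `a_i` and `a_j`. -/
noncomputable def sigmaSwap {n : ℕ} (i j : Fin n) : MulAut (FreeGroup (Fin n)) :=
  sigmaPerm (Equiv.swap i j)

/-- The transposition `σ_{i(n+1)}` from the standard copy of `S_{n+1}` in `Aut(F_n)`:
`a_i ↦ a_i⁻¹` and `a_k ↦ a_k a_i⁻¹` for `k ≠ i`. -/
noncomputable def sigmaLast {n : ℕ} (i : Fin n) : MulAut (FreeGroup (Fin n)) :=
  mkAut (fun k => if k = i then (FreeGroup.of i)⁻¹ else .of k * (.of i)⁻¹)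
        (fun k => if k = i then (FreeGroup.of i)⁻¹ else .of k * (.of i)⁻¹)
    (by intro k; by_cases hk : k = i <;> simp [hk])
    (by intro k; by_cases hk : k = i <;> simp [hk])

lemma autMatrix_rho {n : ℕ} (i j : Fin n) (hij : i ≠ j) :
    autMatrix (rho i j) = Matrix.transvection i j 1 := by
  ext a b
  rw [rho, dif_neg hij]
  by_cases ha : a = i
  · subst ha
    simp [mkAut_apply, autMatrix, expSum, Matrix.transvection, Matrix.single,
      Matrix.one_apply, hij, eq_comm]
  · have ha' : ¬ i = a := fun h' => ha h'.symm
    simp [mkAut_apply, autMatrix, expSum, Matrix.transvection, Matrix.single,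
      Matrix.one_apply, ha, ha', eq_comm]

/-- The right transvections lie in `SAut(F_n)`. -/
lemma rho_mem_SAut {n : ℕ} (i j : Fin n) (hij : i ≠ j) : rho i j ∈ SAut n := by
  show (autMatrix (rho i j)).det = 1
  rw [autMatrix_rho i j hij, Matrix.det_transvection_of_ne i j hij 1]

/-- The subgroup `D_n' ≅ (ℤ/2ℤ)^{n-1} ⋊ A_n` of `SAut(F_n)`, generated by the products
`ε_i ε_j` (`i ≠ j`) together with the automorphisms permuting the generators according to
even permutations. -/
noncomputable def Dn' (n : ℕ) : Subgroup (MulAut (FreeGroup (Fin n))) :=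
  Subgroup.closure
    ({e | ∃ i j : Fin n, i ≠ j ∧ e = eps i * eps j} ∪
     {e | ∃ τ : Equiv.Perm (Fin n), Equiv.Perm.sign τ = 1 ∧ e = sigmaPerm τ})

/-- The standard copy of `S_{n+1}` in `Aut(F_n)`, generated by the transpositions `σ_ij`
and the `σ_{i(n+1)}`. -/
noncomputable def Sn1 (n : ℕ) : Subgroup (MulAut (FreeGroup (Fin n))) :=
  Subgroup.closure
    ({e | ∃ i j : Fin n, i ≠ j ∧ e = sigmaSwap i j} ∪
     {e | ∃ i : Fin n, e = sigmaLast i})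

/-- The standard copy of `A_{n+1}` in `SAut(F_n)`: the intersection of the standard copy
of `S_{n+1}` with `SAut(F_n)`. -/
noncomputable def An1 (n : ℕ) : Subgroup (MulAut (FreeGroup (Fin n))) :=
  Sn1 n ⊓ SAut n

/-!
`Aut(F_n)` permutes the homomorphisms `F_n → ℤ/2`, i.e. the assignments of values in `ℤ/2` to
the generators, by precomposition with the inverse; the sign of this permutation is a character
`Aut(F_n) → {±1}`. The transvection `ρ₀₁ : a₀ ↦ a₀a₁` lies in `SAut(F₂)` and acts on the four
assignments by `(x, y) ↦ (x + y, y)`: a single transposition, so the character is nontrivial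
on `SAut(F₂)`.
-/

namespace FreeGroup

variable (α M : Type*) [Group M]

noncomputable def autPerm : MulAut (FreeGroup α) →* Equiv.Perm (α → M) where
  toFun e := lift.permCongr.symm e.monoidHomCongrLeftEquiv
  map_one' := by ext; simp [MulAut.one_def]
  map_mul' _ _ := by ext; simp [Equiv.permCongr_apply, MulAut.mul_def]

variable {α M}

theorem autPerm_apply (e : MulAut (FreeGroup α)) (g : α → M) (i : α) :
    autPerm α M e g i = lift g (e.symm (of i)) := by
  simp [autPerm, Equiv.permCongr_apply]

end FreeGroup

theorem autPerm_rho_apply {n : ℕ} {M : Type*} [Group M] {i j : Fin n} (hij : i ≠ j)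
    (g : Fin n → M) : autPerm (Fin n) M (rho i j) g = Function.update g i (g i * (g j)⁻¹) := by
  ext k
  rw [autPerm_apply, rho, dif_neg hij]
  rcases eq_or_ne k i with rfl | hk
  · simp [mkAut]
  · simp [mkAut, hk]

theorem autPerm_rho_zero_one :
    autPerm (Fin 2) (Multiplicative (ZMod 2)) (rho 0 1) =
      Equiv.swap ![.ofAdd 0, .ofAdd 1] ![.ofAdd 1, .ofAdd 1] := by
  ext1 g
  rw [autPerm_rho_apply (by decide)]
  revert g
  decide

noncomputable def autSignModTwo (n : ℕ) : MulAut (FreeGroup (Fin n)) →* ℤˣ :=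
  Equiv.Perm.sign.comp (autPerm (Fin n) (Multiplicative (ZMod 2)))

theorem autSignModTwo_rho_zero_one : autSignModTwo 2 (rho 0 1) = -1 := by
  rw [autSignModTwo, MonoidHom.comp_apply, autPerm_rho_zero_one,
    Equiv.Perm.sign_swap (by decide)]

noncomputable def Equiv.Perm.signMulEquivFinTwo : Equiv.Perm (Fin 2) ≃* ℤˣ :=
  MulEquiv.ofBijective Equiv.Perm.sign (by decide)

theorem exists_hom_perm_fin_two_ne_one {G : Type*} [Group G] {χ : G →* ℤˣ} (hχ : χ ≠ 1) :
    ∃ ψ : G →* Equiv.Perm (Fin 2), ψ ≠ 1 :=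
  ⟨Equiv.Perm.signMulEquivFinTwo.symm.toMonoidHom.comp χ, fun h => hχ <| by
    ext g : 1
    simpa using congrArg Equiv.Perm.signMulEquivFinTwo (DFunLike.congr_fun h g)⟩

/-- `SAut(F₂)` admits a nontrivial action on a set of two elements. -/
theorem SAutF2_nontrivial_action_on_two_elements :
    ∃ ψ : ↥(SAut 2) →* Equiv.Perm (Fin 2), ψ ≠ 1 := by
  apply exists_hom_perm_fin_two_ne_one (χ := (autSignModTwo 2).comp (SAut 2).subtype)
  intro h
  have h_rho := DFunLike.congr_fun h ⟨rho 0 1, rho_mem_SAut 0 1 (by decide)⟩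
  simp [autSignModTwo_rho_zero_one] at h_rho
end

section
/- Let n ≥ 5 and let S be the subgroup of D_n′ consisting of all elements of D_n′ that fix the generators a₁ and a₂. Then S equals the centralizer of ρ₁₂ in D_n′: an element g ∈ D_n′ commutes with ρ₁₂ if and only if g(a₁) = a₁ and g(a₂) = a₂. -/
open FreeGroup

/-!
Every element of `D_n'` is a signed permutation automorphism `a_k ↦ a_{τ k}^{±1}`. Evaluating
`g ρ_ij = ρ_ij g` at `a_i` first forces `τ i = i` (otherwise `g a_j` would be trivial), then,
comparing exponent sums of `a_j`, forces `g a_j = a_j^s` where `g a_i = a_i^s`; and `s = -1` is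
impossible because `a_i` and `a_j` do not commute. Conversely, if `g` fixes `a_i` and `a_j`, it
sends every other generator to a power of a generator other than `a_i`, which `ρ_ij` fixes.
-/

lemma eps_apply_of {n : ℕ} (i k : Fin n) :
    eps i (of k) = if k = i then (of i)⁻¹ else of k :=
  FreeGroup.lift_apply_of

lemma sigmaPerm_apply_of {n : ℕ} (τ : Equiv.Perm (Fin n)) (k : Fin n) :
    sigmaPerm τ (of k) = of (τ k) := by
  simp [sigmaPerm]

lemma rho_apply_of {n : ℕ} {i j : Fin n} (hij : i ≠ j) (k : Fin n) :
    rho i j (of k) = if k = i then of i * of j else of k := by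
  rw [rho, dif_neg hij, mkAut_apply, FreeGroup.lift_apply_of]

lemma rho_apply_of_ne {n : ℕ} {i j k : Fin n} (hij : i ≠ j) (hk : k ≠ i) :
    rho i j (of k) = of k := by
  rw [rho_apply_of hij, if_neg hk]

@[simp]
lemma toAdd_expSum_of {n : ℕ} (j i : Fin n) :
    Multiplicative.toAdd (expSum j (of i)) = if i = j then 1 else 0 := by
  simp [expSum]

@[simp]
lemma toAdd_expSum_of_zpow {n : ℕ} (j i : Fin n) (m : ℤ) :
    Multiplicative.toAdd (expSum j (of i ^ m)) = if i = j then m else 0 := by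
  by_cases h : i = j <;> simp [h]

lemma of_zpow_units_ne_one {n : ℕ} (i : Fin n) (s : ℤˣ) : of i ^ (s : ℤ) ≠ 1 := by
  intro h
  have hsum := congrArg (fun w => Multiplicative.toAdd (expSum i w)) h
  simp only [toAdd_expSum_of_zpow, if_true] at hsum
  exact Units.ne_zero s hsum

lemma eq_of_of_zpow_units_eq {n : ℕ} {i j : Fin n} {s t : ℤˣ}
    (h : of i ^ (s : ℤ) = of j ^ (t : ℤ)) : i = j ∧ s = t := by
  have hsum := congrArg (fun w => Multiplicative.toAdd (expSum j w)) h
  simp only [toAdd_expSum_of_zpow, if_true] at hsum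
  by_cases hij : i = j
  · exact ⟨hij, Units.ext (by simpa [hij] using hsum)⟩
  · exact absurd hsum.symm (by simp [hij])

lemma of_mul_of_ne_of_mul_of {α : Type*} [DecidableEq α] {i j : α} (hij : i ≠ j) :
    of i * of j ≠ of j * of i := by
  intro h
  have hS3 := congrArg (FreeGroup.lift fun k : α =>
    if k = i then Equiv.swap (0 : Fin 3) 1 else Equiv.swap 1 2) h
  simp only [_root_.map_mul, FreeGroup.lift_apply_of, if_neg hij.symm] at hS3
  revert hS3
  decide

lemma MulAut.commute_iff_apply_of {α : Type*} {g h : MulAut (FreeGroup α)} :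
    Commute g h ↔ ∀ k, g (h (of k)) = h (g (of k)) := by
  refine ⟨fun hc k => congrArg (· (of k)) hc.eq, fun hgh => ?_⟩
  have := FreeGroup.ext_hom ((g * h : MulAut _) : FreeGroup α →* FreeGroup α) (h * g) hgh
  exact MulEquiv.toMonoidHom_injective this

noncomputable def signedPermAut (n : ℕ) : Subgroup (MulAut (FreeGroup (Fin n))) where
  carrier := {g | ∃ (τ : Equiv.Perm (Fin n)) (s : Fin n → ℤˣ),
    ∀ k, g (of k) = of (τ k) ^ (s k : ℤ)}
  one_mem' := ⟨1, 1, fun k => by simp⟩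
  mul_mem' := by
    rintro a b ⟨τa, sa, ha⟩ ⟨τb, sb, hb⟩
    refine ⟨τa * τb, fun k => sa (τb k) * sb k, fun k => ?_⟩
    rw [MulAut.mul_apply, hb, map_zpow, ha, ← zpow_mul, Units.val_mul]
    rfl
  inv_mem' := by
    rintro a ⟨τ, s, ha⟩
    refine ⟨τ⁻¹, fun k => s (τ⁻¹ k), fun k => ?_⟩
    rw [MulAut.inv_apply, MulEquiv.symm_apply_eq, map_zpow, ha, ← zpow_mul, ← Units.val_mul,
      Int.units_mul_self, Units.val_one, zpow_one, Equiv.Perm.coe_inv, Equiv.apply_symm_apply]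

lemma eps_mem_signedPermAut {n : ℕ} (i : Fin n) : eps i ∈ signedPermAut n :=
  ⟨1, fun k => if k = i then -1 else 1,
    fun k => by by_cases hk : k = i <;> simp [eps_apply_of, hk]⟩

lemma sigmaPerm_mem_signedPermAut {n : ℕ} (τ : Equiv.Perm (Fin n)) :
    sigmaPerm τ ∈ signedPermAut n :=
  ⟨τ, 1, fun k => by simp [sigmaPerm_apply_of]⟩

lemma Dn'_le_signedPermAut (n : ℕ) : Dn' n ≤ signedPermAut n := by
  refine (Subgroup.closure_le _).mpr ?_
  rintro e (⟨i, j, -, rfl⟩ | ⟨τ, -, rfl⟩)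
  · exact mul_mem (eps_mem_signedPermAut i) (eps_mem_signedPermAut j)
  · exact sigmaPerm_mem_signedPermAut τ

section SignedPerm

variable {n : ℕ} {g : MulAut (FreeGroup (Fin n))} {i j : Fin n}

lemma apply_of_eq_of_commute_rho (hg : g ∈ signedPermAut n) (hij : i ≠ j)
    (hc : Commute g (rho i j)) : g (of i) = of i ∧ g (of j) = of j := by
  obtain ⟨τ, s, hg⟩ := hg
  have key := MulAut.commute_iff_apply_of.mp hc i
  rw [rho_apply_of hij, if_pos rfl, _root_.map_mul, hg i, hg j] at key
  have hτi : τ i = i := by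
    by_contra hτi
    rw [map_zpow, rho_apply_of_ne hij hτi, mul_eq_left] at key
    exact of_zpow_units_ne_one _ _ key
  rw [hτi, map_zpow, rho_apply_of hij, if_pos rfl] at key
  have hsum := congrArg (fun w => Multiplicative.toAdd (expSum j w)) key
  simp only [_root_.map_mul, map_zpow, toAdd_mul, toAdd_zpow, toAdd_expSum_of, hij, if_false,
    if_true, Int.zsmul_eq_mul, mul_zero, mul_ite, mul_one, zero_add] at hsum
  have hτj : τ j = j := by
    by_contra hτj
    rw [if_neg hτj] at hsum
    exact Units.ne_zero _ hsum.symm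
  rw [if_pos hτj] at hsum
  rw [hτj, Units.ext hsum] at key
  rcases Int.units_eq_one_or (s i) with hs | hs
  · simp [hg, hτi, hτj, Units.ext hsum, hs]
  · rw [hs, Units.val_neg, Units.val_one, zpow_neg_one, zpow_neg_one, zpow_neg_one,
      ← mul_inv_rev, inv_inj] at key
    exact absurd key.symm (of_mul_of_ne_of_mul_of hij)

lemma commute_rho_of_apply_of_eq (hg : g ∈ signedPermAut n) (hij : i ≠ j)
    (hi : g (of i) = of i) (hj : g (of j) = of j) : Commute g (rho i j) := by
  obtain ⟨τ, s, hg⟩ := hg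
  have hτi : τ i = i := (eq_of_of_zpow_units_eq (s := s i) (t := 1) (by simpa [hg i] using hi)).1
  refine MulAut.commute_iff_apply_of.mpr fun k => ?_
  by_cases hk : k = i
  · subst hk
    rw [rho_apply_of hij, if_pos rfl, _root_.map_mul, hi, hj, rho_apply_of hij, if_pos rfl]
  · have hτk : τ k ≠ i := fun h => hk (τ.injective (h.trans hτi.symm))
    rw [rho_apply_of_ne hij hk, hg k, map_zpow, rho_apply_of_ne hij hτk]

lemma commute_rho_iff_of_mem_signedPermAut (hg : g ∈ signedPermAut n) (hij : i ≠ j) :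
    Commute g (rho i j) ↔ g (of i) = of i ∧ g (of j) = of j :=
  ⟨apply_of_eq_of_commute_rho hg hij, fun ⟨hi, hj⟩ => commute_rho_of_apply_of_eq hg hij hi hj⟩

end SignedPerm

/-- for `n ≥ 5`, an element `g` of `D_n'` commutes with `ρ₁₂` if and only
if `g` fixes the generators `a₁` and `a₂`; i.e. the subgroup `S` of `D_n'` of elements
fixing `a₁, a₂` equals the centralizer of `ρ₁₂` in `D_n'`. -/
theorem fixing_subgroup_eq_centralizer {n : ℕ} (hn : 5 ≤ n)
    (g : MulAut (FreeGroup (Fin n))) (hg : g ∈ Dn' n) :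
    Commute g (rho ⟨0, by omega⟩ ⟨1, by omega⟩) ↔
      (g (FreeGroup.of ⟨0, by omega⟩) = FreeGroup.of ⟨0, by omega⟩ ∧
       g (FreeGroup.of ⟨1, by omega⟩) = FreeGroup.of ⟨1, by omega⟩) :=
  commute_rho_iff_of_mem_signedPermAut (Dn'_le_signedPermAut n hg) (by simp [Fin.ext_iff])
end
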